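/- For n ≥ 6, let I_2^{(1,n)} be the ideal of 2×2 minors of the Hankel matrix built from x_1,…,x_n and I_2^{(3,n)} the ideal of 2×2 minors of the Hankel matrix built from x_3,…,x_n, in S = K[x_1,…,x_n]. Then in(I_2^{(1,n)} · I_2^{(3,n)}) ≠ in(I_2^{(1,n)}) · in(I_2^{(3,n)}) with respect to the degree lexicographic order induced by x_1 > ⋯ > x_n. -/

import Mathlib

/-!
Substituting `x_j ↦ s t^j` for `j ≥ lo` (and keeping the other variables) kills every 2×2 minor
of the Hankel matrix on `x_lo, …, x_n`, so every `f` in its ideal has a second monomial in the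
fibre of its leading monomial. Counting degree and `t`-degree shows that a monomial whose
variables from `x_lo` on are only some `x_j, x_{j+1}` is the deglex-largest in its fibre; hence
every leading monomial is divisible by some `x_a x_b` with `lo ≤ a`, `a + 2 ≤ b`.
With `z p q` the minor on the chain `p, q`, the element
`z 1 5 * z 3 5 - z 1 4 * z 3 6 + z 1 3 * z 4 6` of the product has leading monomial
`x_2² x_4 x_6`, which is not divisible by such an `x_a x_b` (`a ≥ 1`) times such an `x_c x_d`
(`c ≥ 3`).
-/

open MvPolynomial

noncomputable section

/-- Total degree of an exponent vector. -/
def expDeg (u : ℕ →₀ ℕ) : ℕ := u.sum fun _ e => e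

/-- Degree lexicographic order induced by `x_1 > x_2 > ⋯` :
`DegLexLt u v` means the monomial with exponent `u` is strictly smaller than
the one with exponent `v`. -/
def DegLexLt (u v : ℕ →₀ ℕ) : Prop :=
  expDeg u < expDeg v ∨ (expDeg u = expDeg v ∧ toLex u < toLex v)

/-- `u` is the exponent vector of the (unique, strictly largest) leading term of `f`
with respect to degree lexicographic order. -/
def IsLeadMono {K : Type*} [CommRing K] (f : MvPolynomial ℕ K) (u : ℕ →₀ ℕ) : Prop :=
  u ∈ f.support ∧ ∀ v ∈ f.support, v ≠ u → DegLexLt v u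

/-- The initial ideal of `I` : the ideal generated by the leading monomials of
elements of `I`. -/
def initialIdeal {K : Type*} [CommRing K] (I : Ideal (MvPolynomial ℕ K)) :
    Ideal (MvPolynomial ℕ K) :=
  Ideal.span {m | ∃ f ∈ I, ∃ u, IsLeadMono f u ∧ m = monomial u (1 : K)}

/-- `a 1, …, a r` is a chain (1-indexed strictly increasing sequence with gaps ≥ 2). -/
def IsChainOn (r : ℕ) (a : ℕ → ℕ) : Prop := ∀ i, 1 ≤ i → i < r → a i + 1 < a (i + 1)

/-- Exponent vector of the monomial `x_{a 1} ⋯ x_{a r}`. -/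
def chainExp (r : ℕ) (a : ℕ → ℕ) : ℕ →₀ ℕ := ∑ i ∈ Finset.Icc 1 r, Finsupp.single (a i) 1

/-- The maximal minor of a Hankel matrix whose main diagonal is `x_{a 1}, …, x_{a r}`;
its (i,j) entry (0-indexed) is `x_{a (j+1) + i - j}`. -/
def minorOfChain (K : Type*) [CommRing K] (r : ℕ) (a : ℕ → ℕ) : MvPolynomial ℕ K :=
  (Matrix.of fun i j : Fin r =>
    (X (a ((j : ℕ) + 1) + (i : ℕ) - (j : ℕ)) : MvPolynomial ℕ K)).det

/-- The chain `a` is the diagonal chain of a maximal minor of the Hankel matrix with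
`r` rows built from the variables `x_lo, …, x_hi`. -/
def FitsHankel (lo hi r : ℕ) (a : ℕ → ℕ) : Prop :=
  IsChainOn r a ∧ ∀ j, 1 ≤ j → j ≤ r → lo + (j - 1) ≤ a j ∧ a j + (r - j) ≤ hi

/-- The ideal of maximal minors of the Hankel matrix with `r` rows on `x_lo, …, x_hi`. -/
def hankelIdeal (K : Type*) [CommRing K] (lo hi r : ℕ) : Ideal (MvPolynomial ℕ K) :=
  Ideal.span {f | ∃ a : ℕ → ℕ, FitsHankel lo hi r a ∧ f = minorOfChain K r a}

/-- `Interval(a) = ⋃_{2 ≤ i ≤ r} {a_i - 1, a_i}`. -/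
def IntervalOf (r : ℕ) (a : ℕ → ℕ) : Set ℕ :=
  {x | ∃ i, 2 ≤ i ∧ i ≤ r ∧ (x = a i - 1 ∨ x = a i)}

/- Control functions with Δ = 0. -/
def omegaD (r s : ℕ) : ℕ := if r < s then r else s - 1
def omegaC (r s : ℕ) : ℕ := if r ≤ s then r else s
def omegaAD (r s : ℕ) : ℕ := if r ≤ s then r - 1 else s

/-- The three standard-form conditions for a pair of chains, with bounds
`d = Ω_d`, `c = Ω_c`, `ad = Ω_ad`. -/
def StdPairCond (d c ad r s : ℕ) (a b : ℕ → ℕ) : Prop :=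
  ((∀ i, 1 ≤ i → i ≤ d → a i ≤ b (i + 1)) ∨
    (∃ h, 1 ≤ h ∧ h ≤ d ∧ b (h + 1) < a h ∧
      ∀ i, h ≤ i → i ≤ d → a i ∈ IntervalOf s b)) ∧
  ((∀ i, 1 ≤ i → i ≤ c → a i ≤ b i) ∨
    (∃ h, 1 ≤ h ∧ h ≤ c ∧ b h < a h ∧
      ∀ i, h ≤ i → i ≤ c → a i ∈ IntervalOf s b)) ∧
  ((∀ i, 1 ≤ i → i ≤ ad → b i ≤ a (i + 1)) ∨
    (∃ h, 1 ≤ h ∧ h ≤ ad ∧ a (h + 1) < b h ∧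
      ∀ i, h ≤ i → i ≤ ad → b i ∈ IntervalOf r a))

/-- Standard form for a pair of (unlabeled) chains, with Δ = 0. -/
def StdPair (r s : ℕ) (a b : ℕ → ℕ) : Prop :=
  StdPairCond (omegaD r s) (omegaC r s) (omegaAD r s) r s a b

def HasDiagRel (r s : ℕ) (a b : ℕ → ℕ) : Prop :=
  ∃ h k, 1 ≤ h ∧ h ≤ omegaD r s ∧ h + 1 ≤ k ∧ k ≤ s ∧ b k < a h ∧ a h ∉ IntervalOf s b

def HasColRel (r s : ℕ) (a b : ℕ → ℕ) : Prop :=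
  ∃ h, 1 ≤ h ∧ h ≤ omegaC r s ∧ b h < a h ∧ a h ∉ IntervalOf s b

def HasADRel (r s : ℕ) (a b : ℕ → ℕ) : Prop :=
  ∃ h k, 1 ≤ h ∧ h ≤ omegaAD r s ∧ h + 1 ≤ k ∧ k ≤ r ∧ a k < b h ∧ b h ∉ IntervalOf r a

/-- A diagonal relation move (swap of a block of entries), with Ω_d bound `d`. -/
def DiagMoveP (d s : ℕ) (a b a' b' : ℕ → ℕ) : Prop :=
  ∃ h k v, 1 ≤ h ∧ h ≤ d ∧ h + 1 ≤ k ∧ k ≤ s ∧ b k < a h ∧ a h ∉ IntervalOf s b ∧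
    v ≤ h - 1 ∧ (∀ i, i ≤ v → b (k - i) < a (h - i)) ∧
    (v ≠ h - 1 → a (h - v - 1) ≤ b (k - v - 1)) ∧
    (∀ i, a' i = if h - v ≤ i ∧ i ≤ h then b (i + k - h) else a i) ∧
    (∀ i, b' i = if k - v ≤ i ∧ i ≤ k then a (i + h - k) else b i)

/-- A column-wise relation move, with Ω_c bound `c`. -/
def ColMoveP (c s : ℕ) (a b a' b' : ℕ → ℕ) : Prop :=
  ∃ h v, 1 ≤ h ∧ h ≤ c ∧ b h < a h ∧ a h ∉ IntervalOf s b ∧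
    v ≤ h - 1 ∧ (∀ i, i ≤ v → b (h - i) < a (h - i)) ∧
    (v ≠ h - 1 → a (h - v - 1) ≤ b (h - v - 1)) ∧
    (∀ i, a' i = if h - v ≤ i ∧ i ≤ h then b i else a i) ∧
    (∀ i, b' i = if h - v ≤ i ∧ i ≤ h then a i else b i)

/-- An anti-diagonal relation move, with Ω_ad bound `ad`. -/
def ADMoveP (ad r : ℕ) (a b a' b' : ℕ → ℕ) : Prop :=
  ∃ h k v, 1 ≤ h ∧ h ≤ ad ∧ h + 1 ≤ k ∧ k ≤ r ∧ a k < b h ∧ b h ∉ IntervalOf r a ∧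
    v ≤ h - 1 ∧ (∀ i, i ≤ v → a (k - i) < b (h - i)) ∧
    (v ≠ h - 1 → b (h - v - 1) ≤ a (k - v - 1)) ∧
    (∀ i, a' i = if k - v ≤ i ∧ i ≤ k then b (i + h - k) else a i) ∧
    (∀ i, b' i = if h - v ≤ i ∧ i ≤ h then a (i + k - h) else b i)

/-- A relation move on a pair of (unlabeled) chains (Δ = 0). -/
def Move (r s : ℕ) (a b a' b' : ℕ → ℕ) : Prop :=
  DiagMoveP (omegaD r s) s a b a' b' ∨ ColMoveP (omegaC r s) s a b a' b' ∨
    ADMoveP (omegaAD r s) r a b a' b'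

/- Labels and labeled chains, for the family of close cuts. -/
def IsLabel (n : ℕ) (σ : ℕ × ℕ) : Prop :=
  σ = (1, n) ∨ σ = (1, n - 1) ∨ σ = (2, n) ∨ σ = (2, n - 1)

def LabeledChain (n : ℕ) (σ : ℕ × ℕ) (r : ℕ) (a : ℕ → ℕ) : Prop :=
  IsLabel n σ ∧ 1 ≤ r ∧ FitsHankel σ.1 σ.2 r a

/-- Order of labels: (1,n-1) > (1,n) > (2,n-1) > (2,n). -/
def labelRank (n : ℕ) (σ : ℕ × ℕ) : ℕ :=
  if σ = (1, n - 1) then 3 else if σ = (1, n) then 2 else if σ = (2, n - 1) then 1 else 0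

/-- `(σ,a) ≥_c (γ,b)`. -/
def GeC (n : ℕ) (σ : ℕ × ℕ) (r : ℕ) (a : ℕ → ℕ) (γ : ℕ × ℕ) (s : ℕ) (b : ℕ → ℕ) : Prop :=
  labelRank n γ < labelRank n σ ∨
    (σ = γ ∧ (chainExp s b = chainExp r a ∨ DegLexLt (chainExp s b) (chainExp r a)))

/-- The function Δ for a pair of labeled chains. -/
def delta (n : ℕ) (σ γ : ℕ × ℕ) (r s : ℕ) (a b : ℕ → ℕ) : ℕ :=
  if (r ≤ s ∧ a r = n ∧ γ.2 = n - 1) ∨ (s < r ∧ b s = n ∧ σ.2 = n - 1) then 1 else 0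

def omegaD' (Δ r s : ℕ) : ℕ := if r < s then r - Δ else s - 1
def omegaC' (Δ r s : ℕ) : ℕ := if r ≤ s then r - Δ else s
def omegaAD' (Δ r s : ℕ) : ℕ := if r ≤ s then r - 1 else s - Δ

/-- Standard form for a pair of labeled chains `(σ,a) ≥_c (γ,b)`. -/
def StdPairL (n : ℕ) (σ γ : ℕ × ℕ) (r s : ℕ) (a b : ℕ → ℕ) : Prop :=
  StdPairCond (omegaD' (delta n σ γ r s a b) r s) (omegaC' (delta n σ γ r s a b) r s)
    (omegaAD' (delta n σ γ r s a b) r s) r s a b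

/-- A relation move on a pair of labeled chains (Δ as prescribed by the labels). -/
def MoveL (n : ℕ) (σ γ : ℕ × ℕ) (r s : ℕ) (a b a' b' : ℕ → ℕ) : Prop :=
  DiagMoveP (omegaD' (delta n σ γ r s a b) r s) s a b a' b' ∨
  ColMoveP (omegaC' (delta n σ γ r s a b) r s) s a b a' b' ∨
  ADMoveP (omegaAD' (delta n σ γ r s a b) r s) r a b a' b'

/-- A tabel with `l` rows: row `i` (1 ≤ i ≤ l) is the labeled chain
`(lab i, ent i)` of length `len i`, and the rows are ordered decreasingly by `≥_c`. -/
def IsTabel (n l : ℕ) (lab : ℕ → ℕ × ℕ) (len : ℕ → ℕ) (ent : ℕ → ℕ → ℕ) : Prop :=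
  (∀ i, 1 ≤ i → i ≤ l → LabeledChain n (lab i) (len i) (ent i)) ∧
  (∀ i, 1 ≤ i → i < l →
    GeC n (lab i) (len i) (ent i) (lab (i + 1)) (len (i + 1)) (ent (i + 1)))

/-- A tabel is a standard form: the standard-form conditions hold for each
pair of rows `i < j`. -/
def StdTabel (n l : ℕ) (lab : ℕ → ℕ × ℕ) (len : ℕ → ℕ) (ent : ℕ → ℕ → ℕ) : Prop :=
  ∀ i j, 1 ≤ i → i < j → j ≤ l →
    StdPairL n (lab i) (lab j) (len i) (len j) (ent i) (ent j)

/-- Standardness of a quadratic factor `x_i · z_{σ,a}` (condition (ii) of the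
standard-monomial construction). -/
def XZStd (i : ℕ) (σ : ℕ × ℕ) (r : ℕ) (a : ℕ → ℕ) : Prop :=
  i ≤ a 1 ∨ (a 1 < i ∧ (σ.2 < i ∨ i ∈ IntervalOf r a))

lemma Finsupp.exists_ne_map_eq_of_mapDomain_eq_zero {α β M : Type*} [AddCommMonoid M]
    {f : α → β} {x : α →₀ M} (hx : x.mapDomain f = 0) {a : α} (ha : a ∈ x.support) :
    ∃ b ∈ x.support, b ≠ a ∧ f b = f a := by
  classical
  by_contra! h
  have hfib : x.support.filter (fun b => f b = f a) = {a} := by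
    ext b
    simp only [Finset.mem_filter, Finset.mem_singleton]
    exact ⟨fun hb => by_contra fun hba => h b hb.1 hba hb.2, by rintro rfl; exact ⟨ha, rfl⟩⟩
  have := Finsupp.mapDomain_apply_eq_sum f x (a := a)
  rw [hx, hfib, Finset.sum_singleton, Finsupp.zero_apply] at this
  exact Finsupp.mem_support_iff.mp ha this.symm

namespace MvPolynomial

variable {σ R : Type*} [CommSemiring R]

lemma forall_mem_support_add {P : (σ →₀ ℕ) → Prop} {p q : MvPolynomial σ R}
    (hp : ∀ v ∈ p.support, P v) (hq : ∀ v ∈ q.support, P v) : ∀ v ∈ (p + q).support, P v := by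
  classical
  exact fun v hv => (Finset.mem_union.mp (support_add hv)).elim (hp v) (hq v)

lemma forall_mem_support_monomial {P : (σ →₀ ℕ) → Prop} {w : σ →₀ ℕ} (c : R) (hw : P w) :
    ∀ v ∈ (monomial w c).support, P v :=
  fun _ hv => Finset.mem_singleton.mp (support_monomial_subset hv) ▸ hw

open scoped Pointwise in
lemma exists_add_le_of_monomial_mem_span_mul_span [Nontrivial R] {A B : Set (σ →₀ ℕ)}
    {u : σ →₀ ℕ}
    (h : monomial u (1 : R) ∈ Ideal.span ((fun u => monomial u 1) '' A) *
      Ideal.span ((fun u => monomial u 1) '' B)) :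
    ∃ a ∈ A, ∃ b ∈ B, a + b ≤ u := by
  rw [Ideal.span_mul_span'] at h
  replace h := Ideal.span_mono (s := _ * _) (t := (fun u => monomial u (1 : R)) '' (A + B))
    (by
      rintro _ ⟨_, ⟨a, ha, rfl⟩, _, ⟨b, hb, rfl⟩, rfl⟩
      exact ⟨a + b, Set.add_mem_add ha hb, by simp [monomial_mul]⟩) h
  obtain ⟨_, ⟨a, ha, b, hb, rfl⟩, hle⟩ := mem_ideal_span_monomial_image.mp h u (by classical simp)
  exact ⟨a, ha, b, hb, hle⟩

end MvPolynomial

section LeadingMonomials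

lemma expDeg_eq_degree (u : ℕ →₀ ℕ) : expDeg u = u.degree := rfl

lemma degLexLt_iff {u v : ℕ →₀ ℕ} : DegLexLt u v ↔ toDegLex u < toDegLex v := by
  rw [DegLexLt, Finsupp.DegLex.lt_iff, expDeg_eq_degree, expDeg_eq_degree]
  rfl

lemma DegLexLt.asymm {u v : ℕ →₀ ℕ} (h : DegLexLt u v) : ¬ DegLexLt v u := by
  rw [degLexLt_iff] at *
  exact lt_asymm h

lemma degLexLt_of_lex {u v : ℕ →₀ ℕ} (hdeg : u.degree = v.degree) (i : ℕ)
    (hpre : ∀ j < i, u j = v j) (hi : u i < v i) : DegLexLt u v :=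
  Or.inr ⟨hdeg, Finsupp.Lex.lt_iff.mpr ⟨i, hpre, hi⟩⟩

variable {K : Type*} [CommRing K]

lemma monomial_mem_initialIdeal {I : Ideal (MvPolynomial ℕ K)} {f : MvPolynomial ℕ K}
    {u : ℕ →₀ ℕ} (hf : f ∈ I) (hu : IsLeadMono f u) : monomial u (1 : K) ∈ initialIdeal I :=
  Ideal.subset_span ⟨f, hf, u, hu, rfl⟩

lemma isLeadMono_monomial_add {u : ℕ →₀ ℕ} {c : K} (hc : c ≠ 0) {g : MvPolynomial ℕ K}
    (hg : ∀ v ∈ g.support, DegLexLt v u) : IsLeadMono (monomial u c + g) u := by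
  have hu : u ∉ g.support := fun h => (hg u h).asymm (hg u h)
  refine ⟨?_, fun v hv hvu => hg v ?_⟩
  · rwa [mem_support_iff, coeff_add, coeff_monomial, if_pos rfl, notMem_support_iff.mp hu,
      add_zero]
  · rwa [mem_support_iff, coeff_add, coeff_monomial, if_neg (Ne.symm hvu), zero_add,
      ← mem_support_iff] at hv

end LeadingMonomials

section HankelGrading

variable {K : Type*} [CommRing K]

/-- The multidegree of `x^u` for the toric substitution `x_j ↦ y_j s t^j` (`j < lo`),
`x_j ↦ s t^j` (`j ≥ lo`): the exponents below `lo`, the degree and the `t`-degree `∑ j u_j`. -/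
def hankelGrading (lo : ℕ) : (ℕ →₀ ℕ) →+ (ℕ →₀ ℕ) × ℕ × ℕ :=
  (Finsupp.filterAddHom (· < lo)).prod (Finsupp.degree.prod (Finsupp.weight fun j => j))

lemma hankelGrading_single_add_single {lo a b : ℕ} (ha : lo ≤ a) (hb : lo ≤ b) :
    hankelGrading lo (Finsupp.single a 1 + Finsupp.single b 1) = (0, 2, a + b) := by
  simp [hankelGrading, Finsupp.filterAddHom, Finsupp.filter_single_of_neg, Finsupp.weight_single,
    ha, hb]

variable (K) in
def hankelToric (lo : ℕ) : MvPolynomial ℕ K →+* AddMonoidAlgebra K ((ℕ →₀ ℕ) × ℕ × ℕ) :=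
  AddMonoidAlgebra.mapDomainRingHom K (hankelGrading lo)

lemma hankelToric_monomial (lo : ℕ) (u : ℕ →₀ ℕ) (c : K) :
    hankelToric K lo (monomial u c) = AddMonoidAlgebra.single (hankelGrading lo u) c := by
  rw [hankelToric, AddMonoidAlgebra.mapDomainRingHom_apply, ← single_eq_monomial]
  exact AddMonoidAlgebra.mapDomain_single

lemma minorOfChain_two (a : ℕ → ℕ) :
    minorOfChain K 2 a = X (a 1) * X (a 2) - X (a 2 - 1) * X (a 1 + 1) := by
  simp [minorOfChain, Matrix.det_fin_two]

lemma hankelIdeal_le_ker (lo n : ℕ) : hankelIdeal K lo n 2 ≤ RingHom.ker (hankelToric K lo) := by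
  refine Ideal.span_le.mpr ?_
  rintro _ ⟨a, ⟨hchain, hbounds⟩, rfl⟩
  have h12 : a 1 + 1 < a 2 := hchain 1 le_rfl one_lt_two
  have h1 : lo ≤ a 1 := by simpa using (hbounds 1 le_rfl one_le_two).1
  simp only [SetLike.mem_coe, RingHom.mem_ker, minorOfChain_two, X, monomial_mul, one_mul,
    map_sub, hankelToric_monomial]
  rw [hankelGrading_single_add_single h1 (by omega),
    hankelGrading_single_add_single (by omega) (by omega), sub_eq_zero]
  congr 3
  omega

end HankelGrading

section NonadjacentPairs

variable {K : Type*} [CommRing K]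

def HasNonadjacentPair (lo : ℕ) (u : ℕ →₀ ℕ) : Prop :=
  ∃ a b, lo ≤ a ∧ a + 2 ≤ b ∧ u a ≠ 0 ∧ u b ≠ 0

lemma weight_sub_mul_degree_eq_sum {x : ℕ →₀ ℕ} {T : Finset ℕ} (hT : x.support ⊆ T) (c : ℤ) :
    ((Finsupp.weight (fun j => j) x : ℕ) : ℤ) - c * (x.degree : ℕ) =
      ∑ k ∈ T, ((k : ℤ) - c) * x k := by
  rw [Finsupp.weight_apply, Finsupp.degree_apply, Finsupp.sum_of_support_subset x hT _ (by simp),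
    Finset.sum_subset hT (by simp_all), Nat.cast_sum, Nat.cast_sum, Finset.mul_sum,
    ← Finset.sum_sub_distrib]
  exact Finset.sum_congr rfl fun k _ => by simp only [smul_eq_mul, Nat.cast_mul]; ring

/-- If `j` is the first index with `v_j < u_j`, the functional `x ↦ ∑ (k - j - 1) x_k` is constant
on fibres, yet termwise it is smaller at `u` (supported on `j, j + 1` from `lo` on) than at `v`. -/
lemma degLexLt_of_hankelGrading_eq {lo : ℕ} {u v : ℕ →₀ ℕ} (hu : ¬ HasNonadjacentPair lo u)
    (huv : u ≠ v) (h : hankelGrading lo u = hankelGrading lo v) : DegLexLt u v := by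
  simp only [hankelGrading, AddMonoidHom.prod_apply, Prod.mk.injEq] at h
  obtain ⟨hlow, hdeg, hwt⟩ := h
  refine Or.inr ⟨hdeg, ?_⟩
  refine (lt_or_gt_of_ne (toLex.injective.ne huv)).resolve_right fun hvu => ?_
  obtain ⟨j, hpre, hj⟩ := Finsupp.Lex.lt_iff.mp hvu
  change ∀ k < j, v k = u k at hpre
  change v j < u j at hj
  have hlo : lo ≤ j := by
    by_contra hj'
    exact hj.ne' (by simpa [Finsupp.filterAddHom, not_le.mp hj'] using DFunLike.congr_fun hlow j)
  have htail : ∀ k, j + 2 ≤ k → u k = 0 := fun k hk => by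
    by_contra hk'
    exact hu ⟨j, k, hlo, hk, by omega, hk'⟩
  set T := u.support ∪ v.support
  have hsum : ∑ k ∈ T, ((k : ℤ) - (j + 1)) * u k < ∑ k ∈ T, ((k : ℤ) - (j + 1)) * v k := by
    refine Finset.sum_lt_sum (fun k _ => ?_) ⟨j, ?_, ?_⟩
    · rcases lt_or_ge k j with hk | hk
      · rw [hpre k hk]
      rcases (show k = j ∨ k = j + 1 ∨ j + 2 ≤ k by omega) with rfl | rfl | hk
      · have : (v k : ℤ) ≤ u k := by exact_mod_cast hj.le
        linarith
      · simp
      · rw [htail k hk, Nat.cast_zero, mul_zero]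
        exact mul_nonneg (by omega) (Nat.cast_nonneg _)
    · exact Finset.mem_union_left _ (Finsupp.mem_support_iff.mpr (by omega))
    · have : (v j : ℤ) < u j := by exact_mod_cast hj
      linarith
  rw [← weight_sub_mul_degree_eq_sum Finset.subset_union_left,
    ← weight_sub_mul_degree_eq_sum Finset.subset_union_right, hdeg, hwt] at hsum
  exact lt_irrefl _ hsum

lemma hasNonadjacentPair_of_isLeadMono {lo : ℕ} {f : MvPolynomial ℕ K}
    (hf : f ∈ RingHom.ker (hankelToric K lo)) {u : ℕ →₀ ℕ} (hu : IsLeadMono f u) :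
    HasNonadjacentPair lo u := by
  by_contra hgap
  obtain ⟨v, hv, hvu, hfib⟩ :=
    Finsupp.exists_ne_map_eq_of_mapDomain_eq_zero (congrArg AddMonoidAlgebra.coeff hf) hu.1
  exact (hu.2 v hv hvu).asymm (degLexLt_of_hankelGrading_eq hgap hvu.symm hfib.symm)

variable (K) in
def nonadjacentIdeal (lo : ℕ) : Ideal (MvPolynomial ℕ K) :=
  Ideal.span ((fun u => monomial u 1) '' {u | HasNonadjacentPair lo u})

lemma initialIdeal_hankelIdeal_le (lo n : ℕ) :
    initialIdeal (hankelIdeal K lo n 2) ≤ nonadjacentIdeal K lo :=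
  Ideal.span_mono <| by
    rintro _ ⟨f, hf, u, hu, rfl⟩
    exact ⟨u, hasNonadjacentPair_of_isLeadMono (hankelIdeal_le_ker lo n hf) hu, rfl⟩

end NonadjacentPairs

section Witness

variable {K : Type*} [CommRing K]

def pairChain (p q : ℕ) : ℕ → ℕ := fun i => if i = 1 then p else q

lemma minorOfChain_pairChain (p q : ℕ) :
    minorOfChain K 2 (pairChain p q) = X p * X q - X (q - 1) * X (p + 1) := by
  simp [minorOfChain_two, pairChain]

lemma minorOfChain_pairChain_mem {lo n p q : ℕ} (hp : lo ≤ p) (hpq : p + 2 ≤ q) (hq : q ≤ n) :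
    minorOfChain K 2 (pairChain p q) ∈ hankelIdeal K lo n 2 := by
  refine Ideal.subset_span ⟨pairChain p q, ⟨fun i hi hi' => ?_, fun j hj hj' => ?_⟩, rfl⟩
  · obtain rfl : i = 1 := by omega
    show p + 1 < q
    omega
  · obtain rfl | rfl : j = 1 ∨ j = 2 := by omega
    · show lo + 0 ≤ p ∧ p + 1 ≤ n
      omega
    · show lo + 1 ≤ q ∧ q + 0 ≤ n
      omega

variable (K) in
/-- The terms involving `x_1` cancel. -/
def hankelWitness : MvPolynomial ℕ K :=
  minorOfChain K 2 (pairChain 1 5) * minorOfChain K 2 (pairChain 3 5)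
    - minorOfChain K 2 (pairChain 1 4) * minorOfChain K 2 (pairChain 3 6)
    + minorOfChain K 2 (pairChain 1 3) * minorOfChain K 2 (pairChain 4 6)

lemma hankelWitness_mem {n : ℕ} (hn : 6 ≤ n) :
    hankelWitness K ∈ hankelIdeal K 1 n 2 * hankelIdeal K 3 n 2 := by
  refine Ideal.add_mem _ (Ideal.sub_mem _ ?_ ?_) ?_ <;>
    exact Ideal.mul_mem_mul (minorOfChain_pairChain_mem (by omega) (by omega) (by omega))
      (minorOfChain_pairChain_mem (by omega) (by omega) (by omega))

open Finsupp in
def witnessExp : ℕ →₀ ℕ := single 2 2 + single 4 1 + single 6 1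

open Finsupp in
lemma hankelWitness_eq : hankelWitness K = monomial witnessExp (-1) +
    (monomial (single 2 2 + single 5 2) 1 + monomial (single 2 1 + single 3 2 + single 6 1) 1 +
      monomial (single 2 1 + single 3 1 + single 4 1 + single 5 1) (-2) +
      monomial (single 2 1 + single 4 3) 1) := by
  simp only [hankelWitness, minorOfChain_pairChain, witnessExp, add_assoc, monomial_single_add,
    ← C_mul_X_pow_eq_monomial, map_neg, map_one, map_ofNat, Nat.reduceAdd, Nat.reduceSub]
  ring

open Finsupp in
lemma isLeadMono_hankelWitness [Nontrivial K] : IsLeadMono (hankelWitness K) witnessExp := by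
  rw [hankelWitness_eq]
  refine isLeadMono_monomial_add (neg_ne_zero.mpr one_ne_zero) ?_
  refine forall_mem_support_add (forall_mem_support_add (forall_mem_support_add ?_ ?_) ?_) ?_
  · refine forall_mem_support_monomial _ (degLexLt_of_lex (by simp [witnessExp]) 4 ?_ ?_)
    · intro j hj
      interval_cases j <;> simp [witnessExp]
    · simp [witnessExp]
  all_goals
    refine forall_mem_support_monomial _ (degLexLt_of_lex (by simp [witnessExp]) 2 ?_ ?_)
    · intro j hj
      interval_cases j <;> simp [witnessExp]
    · simp [witnessExp]

lemma not_hasNonadjacentPair_add_le {s t : ℕ →₀ ℕ} (hs : HasNonadjacentPair 1 s)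
    (ht : HasNonadjacentPair 3 t) : ¬ s + t ≤ witnessExp := by
  intro hle
  obtain ⟨a, b, -, hab, ha, hb⟩ := hs
  obtain ⟨c, d, hc, hcd, hc', hd'⟩ := ht
  have hsupp : ∀ {w : ℕ →₀ ℕ} {k : ℕ}, w ≤ witnessExp → w k ≠ 0 → k = 2 ∨ k = 4 ∨ k = 6 := by
    intro w k hw hk
    by_contra! h
    exact hk (Nat.le_zero.mp (by simpa [witnessExp, h.1.symm, h.2.1.symm, h.2.2.symm] using hw k))
  have h4 : s 4 + t 4 ≤ 1 := by simpa [witnessExp] using hle 4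
  have h6 : s 6 + t 6 ≤ 1 := by simpa [witnessExp] using hle 6
  rcases hsupp (le_add_self.trans hle) hc' with rfl | rfl | rfl <;>
    rcases hsupp (le_add_self.trans hle) hd' with rfl | rfl | rfl <;> try omega
  rcases hsupp (le_self_add.trans hle) ha with rfl | rfl | rfl <;>
    rcases hsupp (le_self_add.trans hle) hb with rfl | rfl | rfl <;> omega

end Witness

/-- for `n ≥ 6`, `in(I_2^{(1,n)} · I_2^{(3,n)}) ≠
in(I_2^{(1,n)}) · in(I_2^{(3,n)})`. -/
theorem stmt18 {K : Type*} [Field K] (n : ℕ) (hn : 6 ≤ n) :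
    initialIdeal (hankelIdeal K 1 n 2 * hankelIdeal K 3 n 2) ≠
      initialIdeal (hankelIdeal K 1 n 2) * initialIdeal (hankelIdeal K 3 n 2) := by
  intro heq
  have hmem := monomial_mem_initialIdeal (hankelWitness_mem (K := K) hn) isLeadMono_hankelWitness
  rw [heq] at hmem
  obtain ⟨s, hs, t, ht, hle⟩ := exists_add_le_of_monomial_mem_span_mul_span
    (Ideal.mul_mono (initialIdeal_hankelIdeal_le 1 n) (initialIdeal_hankelIdeal_le 3 n) hmem)
  exact not_hasNonadjacentPair_add_le hs ht hle

end
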